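/- Let F_oct = x1x2x3 + x1x3x4 + x1x4x5 + x1x2x5 + x2x3x6 + x3x4x6 + x4x5x6 + x2x5x6 and A = ℝ[∂_1,…,∂_6]/Ann(F_oct). Then A is isomorphic as an ℝ-algebra to ℝ[t_1,t_2,t_3]/(t_1², t_2², t_3²), via the map induced by ∂_1, ∂_6 ↦ t_1, ∂_2, ∂_4 ↦ t_2, ∂_3, ∂_5 ↦ t_3. -/

import Mathlib

open MvPolynomial

noncomputable section

lemma pderiv_commute {n : ℕ} (i j : Fin n) (f : MvPolynomial (Fin n) ℝ) :
    pderiv i (pderiv j f) = pderiv j (pderiv i f) := by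
  rcases eq_or_ne i j with rfl | hij
  · rfl
  · induction f using MvPolynomial.induction_on' with
    | monomial m a =>
        simp only [pderiv_monomial]
        have h1 : (m - Finsupp.single j 1 : Fin n →₀ ℕ) i = m i := by
          rw [Finsupp.tsub_apply, Finsupp.single_eq_of_ne hij, tsub_zero]
        have h2 : (m - Finsupp.single i 1 : Fin n →₀ ℕ) j = m j := by
          rw [Finsupp.tsub_apply, Finsupp.single_eq_of_ne hij.symm, tsub_zero]
        rw [h1, h2, tsub_right_comm]
        congr 1
        ring
    | add p q hp hq => simp [hp, hq]

/-- The set of the partial derivative operators `∂ᵢ` on `ℝ[x₁, …, xₙ]`. -/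
def pdSet (n : ℕ) : Set (Module.End ℝ (MvPolynomial (Fin n) ℝ)) :=
  Set.range fun i : Fin n =>
    ((pderiv i : Derivation ℝ (MvPolynomial (Fin n) ℝ) (MvPolynomial (Fin n) ℝ)) :
      MvPolynomial (Fin n) ℝ →ₗ[ℝ] MvPolynomial (Fin n) ℝ)

instance pdCommRing (n : ℕ) : CommRing (Algebra.adjoin ℝ (pdSet n)) :=
  Algebra.adjoinCommRingOfComm ℝ (by
    rintro _ ⟨i, rfl⟩ _ ⟨j, rfl⟩
    apply LinearMap.ext
    intro f
    exact pderiv_commute i j f)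

/-- The algebra map sending a polynomial `f` (in the "∂ variables") to the differential
operator `f(∂₁, …, ∂ₙ)` acting on `ℝ[x₁, …, xₙ]`; thus `dop n f F` is the result of
applying the differential operator `f(∂₁, …, ∂ₙ)` to the polynomial `F`. -/
def dop (n : ℕ) : MvPolynomial (Fin n) ℝ →ₐ[ℝ] Module.End ℝ (MvPolynomial (Fin n) ℝ) :=
  (Algebra.adjoin ℝ (pdSet n)).val.comp
    (aeval fun i : Fin n =>
      (⟨_, Algebra.subset_adjoin (Set.mem_range_self i)⟩ : Algebra.adjoin ℝ (pdSet n)))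

/-- `Ann F`, the annihilator of `F`: the ideal of all differential-operator polynomials `f`
with `f(∂₁, …, ∂ₙ) F = 0`. -/
def annIdeal {n : ℕ} (F : MvPolynomial (Fin n) ℝ) : Ideal (MvPolynomial (Fin n) ℝ) where
  carrier := {f | dop n f F = 0}
  add_mem' := by
    intro a b ha hb
    simp only [Set.mem_setOf_eq] at *
    rw [map_add, LinearMap.add_apply, ha, hb, add_zero]
  zero_mem' := by
    simp only [Set.mem_setOf_eq, map_zero, LinearMap.zero_apply]
  smul_mem' := by
    intro c f hf
    simp only [Set.mem_setOf_eq] at *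
    rw [smul_eq_mul, map_mul, Module.End.mul_apply, hf, map_zero]

/-- The Artinian Gorenstein algebra `A_F = ℝ[∂₁, …, ∂ₙ]/Ann(F)`. -/
abbrev AF {n : ℕ} (F : MvPolynomial (Fin n) ℝ) := MvPolynomial (Fin n) ℝ ⧸ annIdeal F

/-- The degree-`k` homogeneous component `(A_F)_k` of `A_F`, as a submodule of `A_F`:
the image of the space of homogeneous polynomials of degree `k` under the quotient map. -/
def gradeA {n : ℕ} (F : MvPolynomial (Fin n) ℝ) (k : ℕ) : Submodule ℝ (AF F) :=
  Submodule.map (Ideal.Quotient.mkₐ ℝ (annIdeal F)).toLinearMap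
    (homogeneousSubmodule (Fin n) ℝ k)

/-- `ℓ ∈ A_F` is a strong Lefschetz element of `A_F` (with socle degree `s`) if the
multiplication map `×ℓ^(s-2k) : (A_F)_k → (A_F)_(s-k)` is bijective for every `k` with
`0 ≤ k ≤ s/2`. -/
def IsSLelem {n : ℕ} (F : MvPolynomial (Fin n) ℝ) (s : ℕ) (ℓ : AF F) : Prop :=
  ∀ k : ℕ, 2 * k ≤ s →
    Set.BijOn (fun f => ℓ ^ (s - 2 * k) * f) (gradeA F k) (gradeA F (s - k))

/-- `A_F` (with socle degree `s`) has the strong Lefschetz property. -/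
def HasSLP {n : ℕ} (F : MvPolynomial (Fin n) ℝ) (s : ℕ) : Prop :=
  ∃ ℓ ∈ gradeA F 1, IsSLelem F s ℓ

/-- `A_F` (with socle degree `s`) satisfies the Hodge–Riemann relation with respect to the
class `ℓ` of a linear form `L`: for every `k` with `0 ≤ k ≤ s/2`, the bilinear form
`Q^k_ℓ(f, g) = (-1)^k P^k(f, ℓ^(s-2k) g)` (where `P^k(f, g) = f g F` is the Poincaré duality
pairing) is positive definite on the kernel of `×ℓ^(s-2k+1) : (A_F)_k → (A_F)_(s-k+1)`,
i.e. `Q^k_ℓ(f, f) > 0` for every nonzero `f ∈ (A_F)_k` in that kernel. -/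
def SatisfiesHRR {n : ℕ} (F : MvPolynomial (Fin n) ℝ) (s : ℕ) (L : MvPolynomial (Fin n) ℝ) :
    Prop :=
  ∀ k : ℕ, 2 * k ≤ s →
    ∀ f ∈ homogeneousSubmodule (Fin n) ℝ k,
      dop n (L ^ (s - 2 * k + 1) * f) F = 0 →
      Ideal.Quotient.mk (annIdeal F) f ≠ 0 →
      0 < (-1 : ℝ) ^ k * constantCoeff (dop n (L ^ (s - 2 * k) * f * f) F)

/-- The facet polynomial of the regular octahedron
(vertices `0,…,5` standing for `1,…,6`). -/
def Foct : MvPolynomial (Fin 6) ℝ :=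
  X 0 * X 1 * X 2 + X 0 * X 2 * X 3 + X 0 * X 3 * X 4 + X 0 * X 1 * X 4 +
    X 1 * X 2 * X 5 + X 2 * X 3 * X 5 + X 3 * X 4 * X 5 + X 1 * X 4 * X 5

/-- The ideal `(t₁², t₂², t₃²)` of `ℝ[t₁, t₂, t₃]`. -/
def Joct : Ideal (MvPolynomial (Fin 3) ℝ) :=
  Ideal.span {(X 0 : MvPolynomial (Fin 3) ℝ) ^ 2, (X 1 : MvPolynomial (Fin 3) ℝ) ^ 2,
    (X 2 : MvPolynomial (Fin 3) ℝ) ^ 2}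

/-- The map `ℝ[∂₁, …, ∂₆] → ℝ[t₁,t₂,t₃]/(t₁², t₂², t₃²)` sending
`∂₁, ∂₆ ↦ t₁`, `∂₂, ∂₄ ↦ t₂`, `∂₃, ∂₅ ↦ t₃`. -/
def PhiOct : MvPolynomial (Fin 6) ℝ →ₐ[ℝ] MvPolynomial (Fin 3) ℝ ⧸ Joct :=
  aeval fun i : Fin 6 => Ideal.Quotient.mk Joct (X (![0, 1, 2, 1, 2, 0] i))

/-!
Every facet of the octahedron contains exactly one vertex of each pair of opposite vertices
`{1, 6}`, `{2, 4}`, `{3, 5}`, so `F_oct = (x₁ + x₆)(x₂ + x₄)(x₃ + x₅)` is the pullback of `t₁t₂t₃`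
along `x ↦ (x₁ + x₆, x₂ + x₄, x₃ + x₅)`. By the chain rule `f(∂)` kills this pullback iff `f`,
with each `∂ᵢ` renamed to the `tⱼ` of its pair, kills `t₁t₂t₃`; and the annihilator of a
monomial `tˢ` is `(t₁^(s₁+1), …, tₙ^(sₙ+1))`, as one reads off from
`∂ᵈ tˢ = (∏ᵢ sᵢ(sᵢ - 1)⋯(sᵢ - dᵢ + 1)) tˢ⁻ᵈ`.
-/

section Monomial

variable {n : ℕ}

lemma dop_X_apply (i : Fin n) (f : MvPolynomial (Fin n) ℝ) : dop n (X i) f = pderiv i f := by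
  simp [dop]

lemma dop_mul_apply (a b f : MvPolynomial (Fin n) ℝ) :
    dop n (a * b) f = dop n a (dop n b f) := by
  rw [map_mul, Module.End.mul_apply]

lemma dop_C_apply (c : ℝ) (f : MvPolynomial (Fin n) ℝ) : dop n (C c) f = c • f := by
  rw [← algebraMap_eq, AlgHom.commutes, Module.algebraMap_end_apply]

lemma dop_X_pow_apply_monomial (i : Fin n) (k : ℕ) (s : Fin n →₀ ℕ) (a : ℝ) :
    dop n (X i ^ k) (monomial s a) =
      monomial (s - Finsupp.single i k) (a * (s i).descFactorial k) := by
  induction k with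
  | zero => simp
  | succ k ih =>
    rw [pow_succ', dop_mul_apply, ih, dop_X_apply, pderiv_monomial, tsub_tsub,
      ← Finsupp.single_add, Nat.descFactorial_succ]
    simp only [Finsupp.coe_tsub, Pi.sub_apply, Finsupp.single_eq_same, Nat.cast_mul]
    ring_nf

-- For `d ≰ s` the truncated `s - d` is harmless: some factor `(s i).descFactorial (d i)` is `0`.
lemma dop_monomial_apply_monomial (d s : Fin n →₀ ℕ) (c a : ℝ) :
    dop n (monomial d c) (monomial s a) =
      monomial (s - d) (c * a * ∏ i, ((s i).descFactorial (d i) : ℝ)) := by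
  induction d using Finsupp.induction_linear generalizing s c a with
  | zero => simp [← C_apply, smul_monomial]
  | single i k =>
    rw [← C_mul_X_pow_eq_monomial, dop_mul_apply, dop_X_pow_apply_monomial, dop_C_apply,
      smul_monomial, smul_eq_mul]
    congr 1
    simp only [Finsupp.single_apply, apply_ite, Nat.descFactorial_zero, Nat.cast_one,
      Finset.prod_ite_eq, Finset.mem_univ, if_true]
    ring
  | add d₁ d₂ ih₁ ih₂ =>
    rw [← mul_one c, ← monomial_mul, dop_mul_apply, ih₂, ih₁, tsub_tsub, add_comm d₂]
    congr 1
    have h : ∀ i, ((s - d₂) i).descFactorial (d₁ i) * (s i).descFactorial (d₂ i) =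
        (s i).descFactorial ((d₁ + d₂) i) := fun i => by
      simpa [add_comm] using
        Nat.descFactorial_mul_descFactorial (n := s i) (Nat.le_add_right (d₂ i) (d₁ i))
    simp only [← h, Nat.cast_mul, Finset.prod_mul_distrib]
    ring

lemma prod_descFactorial_ne_zero {d s : Fin n →₀ ℕ} (hd : d ≤ s) :
    ∏ i, ((s i).descFactorial (d i) : ℝ) ≠ 0 :=
  Finset.prod_ne_zero_iff.mpr fun i _ =>
    Nat.cast_ne_zero.mpr (Nat.descFactorial_pos.mpr (hd i)).ne'

lemma dop_monomial_apply_monomial_of_not_le {d s : Fin n →₀ ℕ} (hd : ¬d ≤ s) (c a : ℝ) :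
    dop n (monomial d c) (monomial s a) = 0 := by
  obtain ⟨i, hi⟩ : ∃ i, s i < d i := by simpa [Finsupp.le_def] using hd
  rw [dop_monomial_apply_monomial, Finset.prod_eq_zero (Finset.mem_univ i)
    (by simpa [Nat.descFactorial_eq_zero_iff_lt] using hi), mul_zero, monomial_zero]

lemma coeff_dop_apply_monomial (f : MvPolynomial (Fin n) ℝ) {d s : Fin n →₀ ℕ} (hd : d ≤ s)
    (a : ℝ) :
    coeff (s - d) (dop n f (monomial s a)) =
      a * (∏ i, ((s i).descFactorial (d i) : ℝ)) * coeff d f := by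
  induction f using MvPolynomial.induction_on' with
  | monomial e c =>
    by_cases he : e ≤ s
    · simp only [dop_monomial_apply_monomial, coeff_monomial, tsub_right_inj he hd]
      split_ifs with h
      · subst h; ring
      · simp
    · have hne : e ≠ d := fun h => he (h ▸ hd)
      rw [dop_monomial_apply_monomial_of_not_le he, coeff_zero, coeff_monomial, if_neg hne,
        mul_zero]
  | add p q hp hq => rw [map_add, LinearMap.add_apply, coeff_add, hp, hq, coeff_add, mul_add]

theorem mem_annIdeal_monomial_iff {s : Fin n →₀ ℕ} {a : ℝ} (ha : a ≠ 0)
    {f : MvPolynomial (Fin n) ℝ} : f ∈ annIdeal (monomial s a) ↔ ∀ d ∈ f.support, ¬d ≤ s := by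
  change dop n f (monomial s a) = 0 ↔ _
  constructor
  · intro hf d hd hds
    have h := coeff_dop_apply_monomial f hds a
    rw [hf, coeff_zero, eq_comm, mul_eq_zero, mul_eq_zero] at h
    rcases h with (h | h) | h
    exacts [ha h, prod_descFactorial_ne_zero hds h, mem_support_iff.mp hd h]
  · intro hf
    rw [f.as_sum, map_sum, LinearMap.sum_apply]
    exact Finset.sum_eq_zero fun d hd => dop_monomial_apply_monomial_of_not_le (hf d hd) _ _

theorem annIdeal_monomial {s : Fin n →₀ ℕ} {a : ℝ} (ha : a ≠ 0) :
    annIdeal (monomial s a) = Ideal.span (Set.range fun i => X i ^ (s i + 1)) := by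
  ext f
  have hrange : (Set.range fun i => (X i ^ (s i + 1) : MvPolynomial (Fin n) ℝ)) =
      (fun t => monomial t 1) '' Set.range fun i => Finsupp.single i (s i + 1) := by
    rw [← Set.range_comp]
    simp only [Function.comp_def, X_pow_eq_monomial]
  rw [mem_annIdeal_monomial_iff ha, hrange, mem_ideal_span_monomial_image]
  refine forall₂_congr fun d _ => ?_
  simp only [Set.exists_range_iff, Finsupp.single_le_iff, Nat.succ_le_iff]
  simp [Finsupp.le_def]

end Monomial

section FiberSum

variable {n m : ℕ}

def fiberSum (π : Fin n → Fin m) : MvPolynomial (Fin m) ℝ →ₐ[ℝ] MvPolynomial (Fin n) ℝ :=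
  aeval fun j => ∑ i with π i = j, X i

lemma pderiv_fiberSum (π : Fin n → Fin m) (i : Fin n) (G : MvPolynomial (Fin m) ℝ) :
    pderiv i (fiberSum π G) = fiberSum π (pderiv (π i) G) := by
  induction G using MvPolynomial.induction_on with
  | C a => simp [fiberSum]
  | add p q hp hq => simp only [map_add, hp, hq]
  | mul_X p j hp =>
    have hX : pderiv i (fiberSum π (X j)) = if j = π i then 1 else 0 := by
      simp [fiberSum, pderiv_X, Pi.single_apply, eq_comm]
    rw [map_mul, Derivation.leibniz, hp, hX, Derivation.leibniz, pderiv_X, Pi.single_apply]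
    split_ifs <;> simp

lemma dop_fiberSum (π : Fin n → Fin m) (f : MvPolynomial (Fin n) ℝ)
    (G : MvPolynomial (Fin m) ℝ) :
    dop n f (fiberSum π G) = fiberSum π (dop m (rename π f) G) := by
  induction f using MvPolynomial.induction_on generalizing G with
  | C a => simp
  | add p q hp hq => simp only [map_add, LinearMap.add_apply, hp, hq]
  | mul_X p i hp =>
    rw [map_mul (rename π), rename_X, dop_mul_apply, dop_mul_apply, dop_X_apply, dop_X_apply,
      pderiv_fiberSum, hp]

lemma fiberSum_injective {π : Fin n → Fin m} (hπ : Function.Surjective π) :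
    Function.Injective (fiberSum π) := by
  obtain ⟨σ, hσ⟩ := hπ.hasRightInverse
  let L : MvPolynomial (Fin n) ℝ →ₐ[ℝ] MvPolynomial (Fin m) ℝ :=
    aeval fun i => if σ (π i) = i then X (π i) else 0
  have hL : L.comp (fiberSum π) = AlgHom.id ℝ _ := by
    refine algHom_ext fun j => ?_
    have hσj : σ j ∈ ({i | π i = j} : Finset (Fin n)) := by simp [hσ j]
    simp only [AlgHom.comp_apply, fiberSum, aeval_X, map_sum, L, AlgHom.id_apply]
    rw [Finset.sum_congr rfl fun i hi => by rw [(Finset.mem_filter.mp hi).2],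
      Finset.sum_ite_eq _ _ _, if_pos hσj]
  exact Function.LeftInverse.injective (g := L) fun G => by
    simpa using DFunLike.congr_fun hL G

theorem annIdeal_fiberSum {π : Fin n → Fin m} (hπ : Function.Surjective π)
    (G : MvPolynomial (Fin m) ℝ) :
    annIdeal (fiberSum π G) = (annIdeal G).comap (rename π) := by
  ext f
  change dop n f (fiberSum π G) = 0 ↔ dop m (rename π f) G = 0
  rw [dop_fiberSum, map_eq_zero_iff _ (fiberSum_injective hπ)]

end FiberSum

def octPair : Fin 6 → Fin 3 := ![0, 1, 2, 1, 2, 0]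

lemma Foct_eq_fiberSum : Foct = fiberSum octPair (X 0 * X 1 * X 2) := by
  simp only [fiberSum, map_mul, aeval_X, Finset.sum_filter, Fin.sum_univ_six]
  simp only [Foct, octPair, Matrix.cons_val_zero, Matrix.cons_val_one, Matrix.cons_val,
    Fin.reduceEq, if_true, if_false, add_zero, zero_add]
  ring

lemma Joct_eq_annIdeal : Joct = annIdeal (X 0 * X 1 * X 2 : MvPolynomial (Fin 3) ℝ) := by
  have hmono : (X 0 * X 1 * X 2 : MvPolynomial (Fin 3) ℝ) =
      monomial (Finsupp.single 0 1 + Finsupp.single 1 1 + Finsupp.single 2 1) 1 := by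
    rw [monomial_add_single, monomial_add_single, pow_one, pow_one]
    rfl
  rw [hmono, annIdeal_monomial one_ne_zero, Joct]
  congr 1
  ext p
  simp [Fin.exists_fin_succ, eq_comm]

lemma PhiOct_eq : PhiOct = (Ideal.Quotient.mkₐ ℝ Joct).comp (rename octPair) :=
  algHom_ext fun i => by simp [PhiOct, octPair]

lemma annIdeal_Foct_eq_ker : annIdeal Foct = RingHom.ker PhiOct := by
  rw [Foct_eq_fiberSum, annIdeal_fiberSum (by decide), ← Joct_eq_annIdeal, PhiOct_eq]
  ext f
  simp [Ideal.Quotient.eq_zero_iff_mem]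

/-- The algebra associated to the regular octahedron is isomorphic to
`ℝ[t₁,t₂,t₃]/(t₁², t₂², t₃²)`, via the isomorphism induced by `Φ`. -/
theorem octahedron_algebra_iso :
    ∃ e : AF Foct ≃ₐ[ℝ] MvPolynomial (Fin 3) ℝ ⧸ Joct,
      ∀ f : MvPolynomial (Fin 6) ℝ,
        e (Ideal.Quotient.mk (annIdeal Foct) f) = PhiOct f := by
  have hsurj : Function.Surjective PhiOct := by
    rw [PhiOct_eq]
    exact Ideal.Quotient.mk_surjective.comp (rename_surjective _ (by decide))
  exact ⟨(Ideal.quotientEquivAlgOfEq ℝ annIdeal_Foct_eq_ker).trans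
    (Ideal.quotientKerAlgEquivOfSurjective hsurj), fun f => rfl⟩

end
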